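/- Let M ≥ 1, let 0 = x₀ < ⋯ < x_M = 1 be a partition of [0,1], N ≥ 1, k₀,…,k_{N−1} > 0, γ > 0, and W : ℝ → ℝ continuous. For each time level n = 0,…,N and cell i let ρⁿᵢ, vⁿᵢ, qⁿᵢ : [xᵢ, xᵢ₊₁] → ℝ be continuously differentiable, and for each n = 0,…,N−1 let τ̂ⁿᵢ : [xᵢ, xᵢ₊₁] → ℝ (the half-step chemical potential) be continuously differentiable; assume vⁿ₀(0) = vⁿ_{M−1}(1) = 0 and qⁿ₀(0) = qⁿ_{M−1}(1) = 0 for all n. Write uⁿ⁺½ᵢ := ½(uⁿᵢ + u^{n+1}ᵢ) for u ∈ {ρ, v, q}. Assume for each n = 0,…,N−1, with all cell integrals over [xᵢ, xᵢ₊₁] and node sums over j = 1,…,M−1: (1) Σᵢ ∫ [ (ρ^{n+1}ᵢ − ρⁿᵢ)/kₙ + ∂ₓ(ρⁿ⁺½ᵢ vⁿ⁺½ᵢ) ] τ̂ⁿᵢ dx = Σⱼ [ρ^{n+½}v^{n+½}]ⱼ {τ̂ⁿ}ⱼ; (2) Σᵢ ∫ [ ρⁿ⁺½ᵢ (v^{n+1}ᵢ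 − vⁿᵢ)/kₙ + ∂ₓ(ρⁿ⁺½ᵢ (vⁿ⁺½ᵢ)²) − ∂ₓ(ρⁿ⁺½ᵢ vⁿ⁺½ᵢ) vⁿ⁺½ᵢ + ρⁿ⁺½ᵢ ∂ₓτ̂ⁿᵢ − ½ ρⁿ⁺½ᵢ ∂ₓ((vⁿ⁺½ᵢ)²) ] vⁿ⁺½ᵢ dx = Σⱼ [τ̂ⁿ]ⱼ {ρ^{n+½}v^{n+½}}ⱼ; (3) Σᵢ ∫ [ τ̂ⁿᵢ (ρ^{n+1}ᵢ − ρⁿᵢ) − (W(ρ^{n+1}ᵢ) − W(ρⁿᵢ)) + ( γ ∂ₓqⁿ⁺½ᵢ − ¼((v^{n+1}ᵢ)² + (vⁿᵢ)²) ) (ρ^{n+1}ᵢ − ρⁿᵢ) ] dx = γ Σⱼ [q^{n+½}]ⱼ {ρ^{n+1} − ρⁿ}ⱼ; (4) Σᵢ ∫ ( q^{n+1}ᵢ − qⁿᵢ − ∂ₓρ^{n+1}ᵢ + ∂ₓρⁿᵢ ) qⁿ⁺½ᵢ dx = − Σⱼ [ρ^{n+1} − ρⁿ]ⱼ {q^{n+½}}ⱼ.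 Then the fully discrete energy is exactly conserved: Σᵢ ∫_{xᵢ}^{xᵢ₊₁} [ W(ρⁿᵢ) + ½ρⁿᵢ(vⁿᵢ)² + (γ/2)(qⁿᵢ)² ] dx = Σᵢ ∫_{xᵢ}^{xᵢ₊₁} [ W(ρ⁰ᵢ) + ½ρ⁰ᵢ(v⁰ᵢ)² + (γ/2)(q⁰ᵢ)² ] dx for every n = 0,…,N. -/

import Mathlib

open Set MeasureTheory

/-- Half-step value `u^{n+½}ᵢ(y) = ½(uⁿᵢ(y) + u^{n+1}ᵢ(y))` of a time-indexed
family of cellwise functions. -/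
noncomputable def halfStep (u : ℕ → ℕ → ℝ → ℝ) (n i : ℕ) (y : ℝ) : ℝ :=
  (u n i y + u (n + 1) i y) / 2

/-!
Adding `k·(1) + k·(2) − (3) + γ·(4)` turns every cell integrand into the difference of the
energy densities at levels `n + 1` and `n` plus the derivative of the flux potential
`G = k ρ^{n+½} v^{n+½} τ̂ⁿ − γ q^{n+½} (ρ^{n+1} − ρⁿ)` (`cellFlux`): the Crank–Nicolson
averages make the time differences exact differences of the kinetic and gradient energies,
and the convective terms of (2) cancel. After integration, the cell boundary values of `G`
telescope into the jumps `[G]ⱼ` at the interior nodes, which by the discrete product rule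
`[ab] = [a]{b} + {a}[b]` are exactly the flux terms on the right of (1)–(4); at `x = 0` and
`x = 1`, `G` vanishes by the boundary conditions on `v` and `q`.
-/

section NodeJumps

variable (u : ℕ → ℝ → ℝ) (x : ℕ → ℝ) (j : ℕ)

def nodeJump : ℝ := u (j - 1) (x j) - u j (x j)

noncomputable def nodeAvg : ℝ := (u (j - 1) (x j) + u j (x j)) / 2

-- For `M = 0` both sides vanish, since `M - 1 = 0` in `ℕ`.
theorem sum_range_sub_eq_sum_nodeJump_add (M : ℕ) :
    ∑ i ∈ Finset.range M, (u i (x (i + 1)) - u i (x i))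
      = ∑ j ∈ Finset.Ico 1 M, nodeJump u x j + (u (M - 1) (x M) - u 0 (x 0)) := by
  induction M with
  | zero => simp
  | succ m ih =>
    rcases m with _ | m
    · simp
    · rw [Finset.sum_range_succ, ih, Finset.sum_Ico_succ_top (show 1 ≤ m + 1 by omega)]
      simp only [nodeJump, Nat.add_sub_cancel]
      ring

end NodeJumps

section Cell

variable (ρ v q τh : ℕ → ℕ → ℝ → ℝ) (W : ℝ → ℝ) (k γ : ℝ) (n i : ℕ)

-- The integrands of the equations (1)–(4), tested as in the scheme.
noncomputable def massIntegrand (y : ℝ) : ℝ :=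
  ((ρ (n + 1) i y - ρ n i y) / k
      + deriv (fun z => halfStep ρ n i z * halfStep v n i z) y) * τh n i y

noncomputable def momentumIntegrand (y : ℝ) : ℝ :=
  (halfStep ρ n i y * ((v (n + 1) i y - v n i y) / k)
      + deriv (fun z => halfStep ρ n i z * (halfStep v n i z) ^ 2) y
      - deriv (fun z => halfStep ρ n i z * halfStep v n i z) y * halfStep v n i y
      + halfStep ρ n i y * deriv (τh n i) y
      - (1/2) * halfStep ρ n i y * deriv (fun z => (halfStep v n i z) ^ 2) y)
    * halfStep v n i y

noncomputable def chemicalPotentialIntegrand (y : ℝ) : ℝ :=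
  τh n i y * (ρ (n + 1) i y - ρ n i y) - (W (ρ (n + 1) i y) - W (ρ n i y))
    + (γ * deriv (fun z => halfStep q n i z) y
        - (1/4) * ((v (n + 1) i y) ^ 2 + (v n i y) ^ 2)) * (ρ (n + 1) i y - ρ n i y)

noncomputable def gradientIntegrand (y : ℝ) : ℝ :=
  (q (n + 1) i y - q n i y - deriv (ρ (n + 1) i) y + deriv (ρ n i) y) * halfStep q n i y

noncomputable def energyDensity (y : ℝ) : ℝ :=
  W (ρ n i y) + (1/2) * ρ n i y * (v n i y) ^ 2 + (γ/2) * (q n i y) ^ 2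

noncomputable def cellFlux (z : ℝ) : ℝ :=
  k * (halfStep ρ n i z * halfStep v n i z * τh n i z)
    - γ * (halfStep q n i z * (ρ (n + 1) i z - ρ n i z))

variable {ρ v q τh W k γ n i}

theorem cellFlux_eq_zero {z : ℝ} (hv₀ : v n i z = 0) (hv₁ : v (n + 1) i z = 0)
    (hq₀ : q n i z = 0) (hq₁ : q (n + 1) i z = 0) : cellFlux ρ v q τh k γ n i z = 0 := by
  simp [cellFlux, halfStep, hv₀, hv₁, hq₀, hq₁]

-- The discrete product rule `[ab] = [a]{b} + {a}[b]` behind the energy-consistent fluxes.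
theorem nodeJump_cellFlux (x : ℕ → ℝ) (j : ℕ) :
    nodeJump (cellFlux ρ v q τh k γ n) x j
      = k * (nodeJump (fun i z => halfStep ρ n i z * halfStep v n i z) x j * nodeAvg (τh n) x j
          + nodeJump (τh n) x j * nodeAvg (fun i z => halfStep ρ n i z * halfStep v n i z) x j)
        - γ * (nodeJump (halfStep q n) x j * nodeAvg (fun i z => ρ (n + 1) i z - ρ n i z) x j
          + nodeJump (fun i z => ρ (n + 1) i z - ρ n i z) x j * nodeAvg (halfStep q n) x j) := by
  simp only [nodeJump, nodeAvg, cellFlux]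
  ring

theorem tested_sum_eq_energyDensity_sub_add_deriv_cellFlux (hk : k ≠ 0)
    (hρ₀ : Differentiable ℝ (ρ n i)) (hρ₁ : Differentiable ℝ (ρ (n + 1) i))
    (hv₀ : Differentiable ℝ (v n i)) (hv₁ : Differentiable ℝ (v (n + 1) i))
    (hq₀ : Differentiable ℝ (q n i)) (hq₁ : Differentiable ℝ (q (n + 1) i))
    (hτ : Differentiable ℝ (τh n i)) (y : ℝ) :
    k * massIntegrand ρ v τh k n i y + k * momentumIntegrand ρ v τh k n i y
        - chemicalPotentialIntegrand ρ v q τh W γ n i y + γ * gradientIntegrand ρ q n i y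
      = energyDensity ρ v q W γ (n + 1) i y - energyDensity ρ v q W γ n i y
        + deriv (cellFlux ρ v q τh k γ n i) y := by
  have hρ : Differentiable ℝ (halfStep ρ n i) := (hρ₀.add hρ₁).div_const 2
  have hv : Differentiable ℝ (halfStep v n i) := (hv₀.add hv₁).div_const 2
  have hq : Differentiable ℝ (halfStep q n i) := (hq₀.add hq₁).div_const 2
  have dρ := (hρ y).hasDerivAt
  have dv := (hv y).hasDerivAt
  have dv2 := dv.fun_pow 2
  have e_ρv : deriv (fun z => halfStep ρ n i z * halfStep v n i z) y = _ :=
    (dρ.fun_mul dv).deriv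
  have e_ρv2 : deriv (fun z => halfStep ρ n i z * halfStep v n i z ^ 2) y = _ :=
    (dρ.fun_mul dv2).deriv
  have e_v2 : deriv (fun z => halfStep v n i z ^ 2) y = _ := dv2.deriv
  have e_q : deriv (fun z => halfStep q n i z) y = deriv (halfStep q n i) y := rfl
  have e_G : deriv (cellFlux ρ v q τh k γ n i) y = _ :=
    ((((dρ.fun_mul dv).fun_mul (hτ y).hasDerivAt).const_mul k).fun_sub
      (((hq y).hasDerivAt.fun_mul ((hρ₁ y).hasDerivAt.fun_sub (hρ₀ y).hasDerivAt)).const_mul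
        γ)).deriv
  simp only [massIntegrand, momentumIntegrand, chemicalPotentialIntegrand, gradientIntegrand,
    energyDensity]
  rw [e_ρv, e_ρv2, e_v2, e_q, e_G]
  simp only [halfStep]
  field_simp
  ring

theorem integral_tested_sum_eq_energy_sub_add_cellFlux_sub (hk : k ≠ 0) (hW : Continuous W)
    (hρ₀ : ContDiff ℝ 1 (ρ n i)) (hρ₁ : ContDiff ℝ 1 (ρ (n + 1) i))
    (hv₀ : ContDiff ℝ 1 (v n i)) (hv₁ : ContDiff ℝ 1 (v (n + 1) i))
    (hq₀ : ContDiff ℝ 1 (q n i)) (hq₁ : ContDiff ℝ 1 (q (n + 1) i))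
    (hτ : ContDiff ℝ 1 (τh n i)) (a b : ℝ) :
    k * (∫ y in a..b, massIntegrand ρ v τh k n i y)
        + k * (∫ y in a..b, momentumIntegrand ρ v τh k n i y)
        - (∫ y in a..b, chemicalPotentialIntegrand ρ v q τh W γ n i y)
        + γ * (∫ y in a..b, gradientIntegrand ρ q n i y)
      = (∫ y in a..b, energyDensity ρ v q W γ (n + 1) i y)
        - (∫ y in a..b, energyDensity ρ v q W γ n i y)
        + (cellFlux ρ v q τh k γ n i b - cellFlux ρ v q τh k γ n i a) := by
  have hρ : ContDiff ℝ 1 (halfStep ρ n i) := (hρ₀.add hρ₁).div_const 2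
  have hv : ContDiff ℝ 1 (halfStep v n i) := (hv₀.add hv₁).div_const 2
  have hq : ContDiff ℝ 1 (halfStep q n i) := (hq₀.add hq₁).div_const 2
  have hG : ContDiff ℝ 1 (cellFlux ρ v q τh k γ n i) :=
    (contDiff_const.mul ((hρ.mul hv).mul hτ)).sub (contDiff_const.mul (hq.mul (hρ₁.sub hρ₀)))
  have := (hρ.mul hv).continuous_deriv le_rfl
  have := (hρ.mul (hv.pow 2)).continuous_deriv le_rfl
  have := (hv.pow 2).continuous_deriv le_rfl
  have := hτ.continuous_deriv le_rfl
  have := hq.continuous_deriv le_rfl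
  have := hρ₀.continuous_deriv le_rfl
  have := hρ₁.continuous_deriv le_rfl
  have := hG.continuous_deriv le_rfl
  have : Continuous (massIntegrand ρ v τh k n i) := by unfold massIntegrand; fun_prop
  have : Continuous (momentumIntegrand ρ v τh k n i) := by unfold momentumIntegrand; fun_prop
  have : Continuous (chemicalPotentialIntegrand ρ v q τh W γ n i) := by
    unfold chemicalPotentialIntegrand; fun_prop
  have : Continuous (gradientIntegrand ρ q n i) := by unfold gradientIntegrand; fun_prop
  have : Continuous (energyDensity ρ v q W γ n i) := by unfold energyDensity; fun_prop
  have : Continuous (energyDensity ρ v q W γ (n + 1) i) := by unfold energyDensity; fun_prop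
  calc _ = ∫ y in a..b, (k * massIntegrand ρ v τh k n i y + k * momentumIntegrand ρ v τh k n i y
          - chemicalPotentialIntegrand ρ v q τh W γ n i y + γ * gradientIntegrand ρ q n i y) := by
        rw [intervalIntegral.integral_add, intervalIntegral.integral_sub,
          intervalIntegral.integral_add, intervalIntegral.integral_const_mul,
          intervalIntegral.integral_const_mul, intervalIntegral.integral_const_mul] <;>
        exact Continuous.intervalIntegrable (by fun_prop) a b
    _ = ∫ y in a..b, (energyDensity ρ v q W γ (n + 1) i y - energyDensity ρ v q W γ n i y
          + deriv (cellFlux ρ v q τh k γ n i) y) :=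
        intervalIntegral.integral_congr fun y _ =>
          tested_sum_eq_energyDensity_sub_add_deriv_cellFlux hk
          (hρ₀.differentiable one_ne_zero) (hρ₁.differentiable one_ne_zero)
          (hv₀.differentiable one_ne_zero) (hv₁.differentiable one_ne_zero)
          (hq₀.differentiable one_ne_zero) (hq₁.differentiable one_ne_zero)
          (hτ.differentiable one_ne_zero) y
    _ = _ := by
        rw [intervalIntegral.integral_add, intervalIntegral.integral_sub,
          intervalIntegral.integral_deriv_eq_sub] <;>
        first
        | exact fun y _ => (hG.differentiable one_ne_zero).differentiableAt
        | exact Continuous.intervalIntegrable (by fun_prop) a b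

end Cell

noncomputable def discreteEnergy (ρ v q : ℕ → ℕ → ℝ → ℝ) (W : ℝ → ℝ) (γ : ℝ) (M : ℕ) (xp : ℕ → ℝ)
    (n : ℕ) : ℝ :=
  ∑ i ∈ Finset.range M, ∫ y in xp i..xp (i + 1), energyDensity ρ v q W γ n i y

theorem discreteEnergy_succ_eq {ρ v q τh : ℕ → ℕ → ℝ → ℝ} {W : ℝ → ℝ} {k γ : ℝ} {M : ℕ}
    {xp : ℕ → ℝ} {n : ℕ} (hk : k ≠ 0) (hW : Continuous W)
    (hρ : ∀ i < M, ContDiff ℝ 1 (ρ n i) ∧ ContDiff ℝ 1 (ρ (n + 1) i))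
    (hv : ∀ i < M, ContDiff ℝ 1 (v n i) ∧ ContDiff ℝ 1 (v (n + 1) i))
    (hq : ∀ i < M, ContDiff ℝ 1 (q n i) ∧ ContDiff ℝ 1 (q (n + 1) i))
    (hτ : ∀ i < M, ContDiff ℝ 1 (τh n i))
    (hG₀ : cellFlux ρ v q τh k γ n 0 (xp 0) = 0)
    (hG₁ : cellFlux ρ v q τh k γ n (M - 1) (xp M) = 0)
    (h1 : ∑ i ∈ Finset.range M, ∫ y in xp i..xp (i + 1), massIntegrand ρ v τh k n i y
      = ∑ j ∈ Finset.Ico 1 M, nodeJump (fun i z => halfStep ρ n i z * halfStep v n i z) xp j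
          * nodeAvg (τh n) xp j)
    (h2 : ∑ i ∈ Finset.range M, ∫ y in xp i..xp (i + 1), momentumIntegrand ρ v τh k n i y
      = ∑ j ∈ Finset.Ico 1 M, nodeJump (τh n) xp j
          * nodeAvg (fun i z => halfStep ρ n i z * halfStep v n i z) xp j)
    (h3 : ∑ i ∈ Finset.range M, ∫ y in xp i..xp (i + 1),
        chemicalPotentialIntegrand ρ v q τh W γ n i y
      = γ * ∑ j ∈ Finset.Ico 1 M, nodeJump (halfStep q n) xp j
          * nodeAvg (fun i z => ρ (n + 1) i z - ρ n i z) xp j)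
    (h4 : ∑ i ∈ Finset.range M, ∫ y in xp i..xp (i + 1), gradientIntegrand ρ q n i y
      = -∑ j ∈ Finset.Ico 1 M, nodeJump (fun i z => ρ (n + 1) i z - ρ n i z) xp j
          * nodeAvg (halfStep q n) xp j) :
    discreteEnergy ρ v q W γ M xp (n + 1) = discreteEnergy ρ v q W γ M xp n := by
  have cells := Finset.sum_congr rfl fun i hi =>
    have hi := Finset.mem_range.mp hi
    integral_tested_sum_eq_energy_sub_add_cellFlux_sub (γ := γ) hk hW (hρ i hi).1 (hρ i hi).2
      (hv i hi).1 (hv i hi).2 (hq i hi).1 (hq i hi).2 (hτ i hi) (xp i) (xp (i + 1))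
  have tele := sum_range_sub_eq_sum_nodeJump_add (cellFlux ρ v q τh k γ n) xp M
  rw [hG₀, hG₁] at tele
  simp only [nodeJump_cellFlux, Finset.sum_add_distrib, Finset.sum_sub_distrib, ← Finset.mul_sum]
    at cells tele
  rw [h1, h2, h3, h4] at cells
  unfold discreteEnergy
  linear_combination -cells - tele

theorem dg_fully_discrete_energy_conservation_general
    (M : ℕ) (xp : ℕ → ℝ)
    (hx0 : xp 0 = 0) (hxM : xp M = 1)
    (N : ℕ) (k : ℕ → ℝ) (hk : ∀ n < N, 0 < k n)
    (γ : ℝ) (W : ℝ → ℝ) (hW : Continuous W)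
    (ρ v q : ℕ → ℕ → ℝ → ℝ)  -- time level, cell index, position
    (τh : ℕ → ℕ → ℝ → ℝ)    -- half-step chemical potential, time levels n < N
    (hρ : ∀ n ≤ N, ∀ i < M, ContDiff ℝ 1 (ρ n i))
    (hv : ∀ n ≤ N, ∀ i < M, ContDiff ℝ 1 (v n i))
    (hq : ∀ n ≤ N, ∀ i < M, ContDiff ℝ 1 (q n i))
    (hτ : ∀ n < N, ∀ i < M, ContDiff ℝ 1 (τh n i))
    -- boundary conditions
    (hbv : ∀ n ≤ N, v n 0 0 = 0 ∧ v n (M - 1) 1 = 0)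
    (hbq : ∀ n ≤ N, q n 0 0 = 0 ∧ q n (M - 1) 1 = 0)
    -- (1) mass equation tested with τ̂ⁿ
    (h1 : ∀ n < N,
      ∑ i ∈ Finset.range M, ∫ y in xp i..xp (i + 1),
          (((ρ (n + 1) i y - ρ n i y) / k n
              + deriv (fun z => halfStep ρ n i z * halfStep v n i z) y)
            * τh n i y)
        = ∑ j ∈ Finset.Ico 1 M,
            (halfStep ρ n (j - 1) (xp j) * halfStep v n (j - 1) (xp j)
              - halfStep ρ n j (xp j) * halfStep v n j (xp j))
            * ((τh n (j - 1) (xp j) + τh n j (xp j)) / 2))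
    -- (2) momentum equation tested with v^{n+½}
    (h2 : ∀ n < N,
      ∑ i ∈ Finset.range M, ∫ y in xp i..xp (i + 1),
          ((halfStep ρ n i y * ((v (n + 1) i y - v n i y) / k n)
              + deriv (fun z => halfStep ρ n i z * (halfStep v n i z) ^ 2) y
              - deriv (fun z => halfStep ρ n i z * halfStep v n i z) y
                  * halfStep v n i y
              + halfStep ρ n i y * deriv (τh n i) y
              - (1/2) * halfStep ρ n i y
                  * deriv (fun z => (halfStep v n i z) ^ 2) y)
            * halfStep v n i y)
        = ∑ j ∈ Finset.Ico 1 M,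
            (τh n (j - 1) (xp j) - τh n j (xp j))
            * ((halfStep ρ n (j - 1) (xp j) * halfStep v n (j - 1) (xp j)
                + halfStep ρ n j (xp j) * halfStep v n j (xp j)) / 2))
    -- (3) chemical-potential equation tested with ρ^{n+1} − ρⁿ (multiplied out)
    (h3 : ∀ n < N,
      ∑ i ∈ Finset.range M, ∫ y in xp i..xp (i + 1),
          (τh n i y * (ρ (n + 1) i y - ρ n i y)
            - (W (ρ (n + 1) i y) - W (ρ n i y))
            + (γ * deriv (fun z => halfStep q n i z) y
                - (1/4) * ((v (n + 1) i y) ^ 2 + (v n i y) ^ 2))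
              * (ρ (n + 1) i y - ρ n i y))
        = γ * ∑ j ∈ Finset.Ico 1 M,
            (halfStep q n (j - 1) (xp j) - halfStep q n j (xp j))
            * (((ρ (n + 1) (j - 1) (xp j) - ρ n (j - 1) (xp j))
                + (ρ (n + 1) j (xp j) - ρ n j (xp j))) / 2))
    -- (4) incremental gradient equation tested with q^{n+½}
    (h4 : ∀ n < N,
      ∑ i ∈ Finset.range M, ∫ y in xp i..xp (i + 1),
          ((q (n + 1) i y - q n i y
              - deriv (ρ (n + 1) i) y + deriv (ρ n i) y)
            * halfStep q n i y)
        = -∑ j ∈ Finset.Ico 1 M,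
            ((ρ (n + 1) (j - 1) (xp j) - ρ n (j - 1) (xp j))
              - (ρ (n + 1) j (xp j) - ρ n j (xp j)))
            * ((halfStep q n (j - 1) (xp j) + halfStep q n j (xp j)) / 2)) :
    ∀ n ≤ N,
      (∑ i ∈ Finset.range M, ∫ y in xp i..xp (i + 1),
          (W (ρ n i y) + (1/2) * ρ n i y * (v n i y) ^ 2
            + (γ/2) * (q n i y) ^ 2))
        = ∑ i ∈ Finset.range M, ∫ y in xp i..xp (i + 1),
            (W (ρ 0 i y) + (1/2) * ρ 0 i y * (v 0 i y) ^ 2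
              + (γ/2) * (q 0 i y) ^ 2) := by
  intro n hn
  induction n with
  | zero => rfl
  | succ m ih =>
    have hm : m < N := hn
    have hG₀ : cellFlux ρ v q τh (k m) γ m 0 (xp 0) = 0 := by
      rw [hx0]
      exact cellFlux_eq_zero (hbv m hm.le).1 (hbv (m + 1) hn).1 (hbq m hm.le).1 (hbq (m + 1) hn).1
    have hG₁ : cellFlux ρ v q τh (k m) γ m (M - 1) (xp M) = 0 := by
      rw [hxM]
      exact cellFlux_eq_zero (hbv m hm.le).2 (hbv (m + 1) hn).2 (hbq m hm.le).2 (hbq (m + 1) hn).2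
    exact (discreteEnergy_succ_eq (hk m hm).ne' hW
      (fun i hi => ⟨hρ m hm.le i hi, hρ (m + 1) hn i hi⟩)
      (fun i hi => ⟨hv m hm.le i hi, hv (m + 1) hn i hi⟩)
      (fun i hi => ⟨hq m hm.le i hi, hq (m + 1) hn i hi⟩)
      (hτ m hm) hG₀ hG₁ (h1 m hm) (h2 m hm) (h3 m hm) (h4 m hm)).trans (ih hm.le)

/-- Energy conservation for the fully discrete (Crank–Nicolson in time, DG in
space) scheme for the Euler–Korteweg system (`μ = 0`) on a partition
`0 = x₀ < ⋯ < x_M = 1`, with energy-consistent fluxes and with the four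
equations tested respectively by the half-step chemical potential `τ̂ⁿ`, the
half-step velocity `v^{n+½}`, the increment `ρ^{n+1} − ρⁿ`, and the half-step
gradient variable `q^{n+½}`: the fully discrete energy
`Σᵢ ∫ W(ρⁿᵢ) + ½ρⁿᵢ(vⁿᵢ)² + (γ/2)(qⁿᵢ)²` is exactly conserved. -/
theorem dg_fully_discrete_energy_conservation
    (M : ℕ) (hM : 1 ≤ M) (xp : ℕ → ℝ)
    (hx0 : xp 0 = 0) (hxM : xp M = 1)
    (hx : ∀ i < M, xp i < xp (i + 1))
    (N : ℕ) (hN : 1 ≤ N) (k : ℕ → ℝ) (hk : ∀ n < N, 0 < k n)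
    (γ : ℝ) (hγ : 0 < γ) (W : ℝ → ℝ) (hW : Continuous W)
    (ρ v q : ℕ → ℕ → ℝ → ℝ)  -- time level, cell index, position
    (τh : ℕ → ℕ → ℝ → ℝ)    -- half-step chemical potential, time levels n < N
    (hρ : ∀ n ≤ N, ∀ i < M, ContDiff ℝ 1 (ρ n i))
    (hv : ∀ n ≤ N, ∀ i < M, ContDiff ℝ 1 (v n i))
    (hq : ∀ n ≤ N, ∀ i < M, ContDiff ℝ 1 (q n i))
    (hτ : ∀ n < N, ∀ i < M, ContDiff ℝ 1 (τh n i))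
    -- boundary conditions
    (hbv : ∀ n ≤ N, v n 0 0 = 0 ∧ v n (M - 1) 1 = 0)
    (hbq : ∀ n ≤ N, q n 0 0 = 0 ∧ q n (M - 1) 1 = 0)
    -- (1) mass equation tested with τ̂ⁿ
    (h1 : ∀ n < N,
      ∑ i ∈ Finset.range M, ∫ y in xp i..xp (i + 1),
          (((ρ (n + 1) i y - ρ n i y) / k n
              + deriv (fun z => halfStep ρ n i z * halfStep v n i z) y)
            * τh n i y)
        = ∑ j ∈ Finset.Ico 1 M,
            (halfStep ρ n (j - 1) (xp j) * halfStep v n (j - 1) (xp j)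
              - halfStep ρ n j (xp j) * halfStep v n j (xp j))
            * ((τh n (j - 1) (xp j) + τh n j (xp j)) / 2))
    -- (2) momentum equation tested with v^{n+½}
    (h2 : ∀ n < N,
      ∑ i ∈ Finset.range M, ∫ y in xp i..xp (i + 1),
          ((halfStep ρ n i y * ((v (n + 1) i y - v n i y) / k n)
              + deriv (fun z => halfStep ρ n i z * (halfStep v n i z) ^ 2) y
              - deriv (fun z => halfStep ρ n i z * halfStep v n i z) y
                  * halfStep v n i y
              + halfStep ρ n i y * deriv (τh n i) y
              - (1/2) * halfStep ρ n i y
                  * deriv (fun z => (halfStep v n i z) ^ 2) y)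
            * halfStep v n i y)
        = ∑ j ∈ Finset.Ico 1 M,
            (τh n (j - 1) (xp j) - τh n j (xp j))
            * ((halfStep ρ n (j - 1) (xp j) * halfStep v n (j - 1) (xp j)
                + halfStep ρ n j (xp j) * halfStep v n j (xp j)) / 2))
    -- (3) chemical-potential equation tested with ρ^{n+1} − ρⁿ (multiplied out)
    (h3 : ∀ n < N,
      ∑ i ∈ Finset.range M, ∫ y in xp i..xp (i + 1),
          (τh n i y * (ρ (n + 1) i y - ρ n i y)
            - (W (ρ (n + 1) i y) - W (ρ n i y))
            + (γ * deriv (fun z => halfStep q n i z) y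
                - (1/4) * ((v (n + 1) i y) ^ 2 + (v n i y) ^ 2))
              * (ρ (n + 1) i y - ρ n i y))
        = γ * ∑ j ∈ Finset.Ico 1 M,
            (halfStep q n (j - 1) (xp j) - halfStep q n j (xp j))
            * (((ρ (n + 1) (j - 1) (xp j) - ρ n (j - 1) (xp j))
                + (ρ (n + 1) j (xp j) - ρ n j (xp j))) / 2))
    -- (4) incremental gradient equation tested with q^{n+½}
    (h4 : ∀ n < N,
      ∑ i ∈ Finset.range M, ∫ y in xp i..xp (i + 1),
          ((q (n + 1) i y - q n i y
              - deriv (ρ (n + 1) i) y + deriv (ρ n i) y)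
            * halfStep q n i y)
        = -∑ j ∈ Finset.Ico 1 M,
            ((ρ (n + 1) (j - 1) (xp j) - ρ n (j - 1) (xp j))
              - (ρ (n + 1) j (xp j) - ρ n j (xp j)))
            * ((halfStep q n (j - 1) (xp j) + halfStep q n j (xp j)) / 2)) :
    ∀ n ≤ N,
      (∑ i ∈ Finset.range M, ∫ y in xp i..xp (i + 1),
          (W (ρ n i y) + (1/2) * ρ n i y * (v n i y) ^ 2
            + (γ/2) * (q n i y) ^ 2))
        = ∑ i ∈ Finset.range M, ∫ y in xp i..xp (i + 1),
            (W (ρ 0 i y) + (1/2) * ρ 0 i y * (v 0 i y) ^ 2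
              + (γ/2) * (q 0 i y) ^ 2) :=
  dg_fully_discrete_energy_conservation_general M xp hx0 hxM N k hk γ W hW ρ v q τh hρ hv hq hτ hbv
    hbq h1 h2 h3 h4
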